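/- Let f : Finset (Fin n) → ℝ be a polymatroid rank function (normalized, monotone, submodular). For any 1 ≤ r ≤ n, the sum over all r-subsets J of {1,…,n} of (f(univ) - f(J)) is at most C(n-1, n-r-1) · f(univ), provided r < n. -/

import Mathlib

/-! For submodular `f` the marginal `f B - f (B.erase i)` only shrinks as `B` grows, so the
marginals of the elements of `B` are bounded by the increments along a chain `∅ ⊂ ⋯ ⊂ B` and
sum to at most `f B - f ∅`. Summing this over all `(r+1)`-sets and double counting the pairs
`(B.erase i, i)` gives `r S_{r+1} ≤ (n - r) S_r` for the level sums `S_r = ∑_{#J = r} f J`,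
i.e. `S_r / (r C(n, r))` is nonincreasing in `r` (Han's inequality). Comparing with `r = n`
yields `n S_r ≥ r C(n, r) f univ`, and `(n - r) C(n, r) = n C(n - 1, n - r - 1)`. -/

open Finset

section Han

variable {α : Type*} [DecidableEq α] (f : Finset α → ℝ)

theorem sub_erase_le_sub_erase_of_subset
    (hsub : ∀ A B : Finset α, f (A ∪ B) + f (A ∩ B) ≤ f A + f B)
    {A B : Finset α} (hAB : A ⊆ B) {i : α} (hi : i ∈ A) :
    f B - f (B.erase i) ≤ f A - f (A.erase i) := by
  have h := hsub (B.erase i) A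
  rw [erase_union_of_mem hi, union_eq_left.2 hAB, erase_inter, inter_eq_right.2 hAB] at h
  linarith

theorem sum_sub_erase_le
    (hsub : ∀ A B : Finset α, f (A ∪ B) + f (A ∩ B) ≤ f A + f B) (B : Finset α) :
    ∑ i ∈ B, (f B - f (B.erase i)) ≤ f B - f ∅ := by
  induction B using Finset.induction_on with
  | empty => simp
  | @insert a A ha ih =>
    have hmarg : ∑ i ∈ A, (f (insert a A) - f ((insert a A).erase i)) ≤
        ∑ i ∈ A, (f A - f (A.erase i)) :=
      sum_le_sum fun i hi => sub_erase_le_sub_erase_of_subset f hsub (subset_insert a A) hi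
    rw [sum_insert ha, erase_insert ha]
    linarith

theorem sum_powersetCard_succ_sum_erase {M : Type*} [AddCommMonoid M] (g : Finset α → M)
    (s : Finset α) (r : ℕ) :
    ∑ B ∈ powersetCard (r + 1) s, ∑ i ∈ B, g (B.erase i) =
      ∑ J ∈ powersetCard r s, (#s - r) • g J := by
  have hcount : ∀ J ∈ powersetCard r s, (#s - r) • g J = ∑ _i ∈ s \ J, g J := by
    intro J hJ
    rw [mem_powersetCard] at hJ
    rw [sum_const, card_sdiff_of_subset hJ.1, hJ.2]
  rw [sum_congr rfl hcount, sum_sigma', sum_sigma']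
  refine sum_nbij' (fun p => ⟨p.1.erase p.2, p.2⟩) (fun p => ⟨insert p.2 p.1, p.2⟩)
    ?_ ?_ ?_ ?_ fun _ _ => rfl
  · rintro ⟨B, i⟩ h
    simp only [mem_sigma, mem_powersetCard] at h ⊢
    obtain ⟨⟨hBs, hB⟩, hiB⟩ := h
    refine ⟨⟨(erase_subset i B).trans hBs, by rw [card_erase_of_mem hiB, hB]; rfl⟩, ?_⟩
    exact mem_sdiff.2 ⟨hBs hiB, notMem_erase i B⟩
  · rintro ⟨J, i⟩ h
    simp only [mem_sigma, mem_powersetCard, mem_sdiff] at h ⊢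
    obtain ⟨⟨hJs, hJ⟩, his, hiJ⟩ := h
    exact ⟨⟨insert_subset his hJs, by rw [card_insert_of_notMem hiJ, hJ]⟩, mem_insert_self i J⟩
  · rintro ⟨B, i⟩ h
    simp only [mem_sigma] at h
    simp [insert_erase h.2]
  · rintro ⟨J, i⟩ h
    simp only [mem_sigma, mem_sdiff] at h
    simp [erase_insert h.2.2]

theorem mul_sum_powersetCard_succ_le (h0 : f ∅ = 0)
    (hsub : ∀ A B : Finset α, f (A ∪ B) + f (A ∩ B) ≤ f A + f B) (s : Finset α) (r : ℕ) :
    r * ∑ B ∈ powersetCard (r + 1) s, f B ≤ (#s - r : ℕ) * ∑ J ∈ powersetCard r s, f J := by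
  have hB : ∀ B ∈ powersetCard (r + 1) s, r * f B ≤ ∑ i ∈ B, f (B.erase i) := by
    intro B hB
    have h := sum_sub_erase_le f hsub B
    rw [sum_sub_distrib, sum_const, (mem_powersetCard.1 hB).2, nsmul_eq_mul, h0] at h
    push_cast at h
    linarith
  calc r * ∑ B ∈ powersetCard (r + 1) s, f B
      ≤ ∑ B ∈ powersetCard (r + 1) s, ∑ i ∈ B, f (B.erase i) := by
        rw [mul_sum]; exact sum_le_sum hB
    _ = (#s - r : ℕ) * ∑ J ∈ powersetCard r s, f J := by
        rw [sum_powersetCard_succ_sum_erase, mul_sum]; simp only [nsmul_eq_mul]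

theorem han_inequality (h0 : f ∅ = 0)
    (hsub : ∀ A B : Finset α, f (A ∪ B) + f (A ∩ B) ≤ f A + f B) (s : Finset α) {r : ℕ}
    (hr : r ≤ #s) :
    r * (#s).choose r * f s ≤ #s * ∑ J ∈ powersetCard r s, f J := by
  induction hr using Nat.decreasingInduction with
  | self => rw [powersetCard_self, sum_singleton, Nat.choose_self, Nat.cast_one, mul_one]
  | of_succ r hr ih =>
    have hstep := mul_sum_powersetCard_succ_le f h0 hsub s r
    have hchoose : ((#s).choose (r + 1) : ℝ) * (r + 1) = (#s).choose r * (#s - r : ℕ) := by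
      exact_mod_cast Nat.choose_succ_right_eq #s r
    have hpos : (0 : ℝ) < (#s - r : ℕ) := by exact_mod_cast Nat.sub_pos_of_lt hr
    refine le_of_mul_le_mul_left ?_ hpos
    push_cast at ih
    linear_combination mul_le_mul_of_nonneg_left ih r.cast_nonneg +
      mul_le_mul_of_nonneg_left hstep (#s).cast_nonneg - r * f s * hchoose

end Han

theorem han_sum_bound_general {n : ℕ} (f : Finset (Fin n) → ℝ)
    (h0 : f ∅ = 0)
    (hsub : ∀ A B : Finset (Fin n), f (A ∪ B) + f (A ∩ B) ≤ f A + f B)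
    (r : ℕ) (h2 : r < n) :
    ∑ J ∈ powersetCard r (univ : Finset (Fin n)), (f univ - f J) ≤
      (((n - 1).choose (n - r - 1) : ℕ) : ℝ) * f univ := by
  have hn : (0 : ℝ) < n := by exact_mod_cast r.zero_le.trans_lt h2
  have han := han_inequality f h0 hsub univ (r := r) (by simpa using h2.le)
  have hchoose : ((n - 1).choose (n - r - 1) * n : ℕ) = (n.choose r * (n - r) : ℕ) := by
    obtain ⟨m, rfl⟩ := Nat.exists_eq_add_of_lt h2
    rw [show r + m + 1 - 1 = r + m by omega, show r + m + 1 - r - 1 = m by omega,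
      ← Nat.choose_symm_add, Nat.choose_mul_succ_eq]
  replace hchoose : ((n - 1).choose (n - r - 1) : ℝ) * n = n.choose r * (n - r) := by
    rw [← Nat.cast_sub h2.le]; exact_mod_cast hchoose
  rw [card_univ, Fintype.card_fin] at han
  rw [sum_sub_distrib, sum_const, card_powersetCard, card_univ, Fintype.card_fin, nsmul_eq_mul]
  refine le_of_mul_le_mul_left ?_ hn
  linear_combination han - f univ * hchoose

/-- Averaged form of Han's inequality used in the converse proof:
`∑_{J : |J|=r} (f(univ) - f(J)) ≤ C(n-1, n-r-1) · f(univ)` for a polymatroid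
rank function `f` (abstracting `∑ H(Y_{U∖J}|Y_J) ≤ C(|U|-1,|U|-r-1) H(Y_U)`). -/
theorem han_sum_bound {n : ℕ} (f : Finset (Fin n) → ℝ)
    (h0 : f ∅ = 0)
    (hmono : ∀ A B : Finset (Fin n), A ⊆ B → f A ≤ f B)
    (hsub : ∀ A B : Finset (Fin n), f (A ∪ B) + f (A ∩ B) ≤ f A + f B)
    (r : ℕ) (h1 : 1 ≤ r) (h2 : r < n) :
    ∑ J ∈ powersetCard r (univ : Finset (Fin n)), (f univ - f J) ≤
      (((n - 1).choose (n - r - 1) : ℕ) : ℝ) * f univ :=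
  han_sum_bound_general f h0 hsub r h2
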